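/- Let n ≥ 1 and B = B(0,1) ⊂ ℝ^n. There exists a constant C > 0 depending only on n such that for every Young function φ and every function f : B → ℝ that is continuously differentiable on B, setting c = (1/Vol(B(0,1/2)))·∫_{B(0,1/2)} f(x) dx, one has ‖f − c‖_{L^φ(B)} ≤ C·‖ x ↦ ‖Df(x)‖ ‖_{L^φ(B)}, where the Luxemburg norms are taken with respect to Lebesgue measure on B and ‖Df(x)‖ is the operator norm of the Fréchet derivative of f at x. -/

import Mathlib

open MeasureTheory ENNReal

/-- A Young function: a convex, even, nonnegative function `φ : ℝ → [0,∞)`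
with `φ t = 0` iff `t = 0`. -/
def IsYoungFunction (φ : ℝ → ℝ) : Prop :=
  ConvexOn ℝ Set.univ φ ∧ (∀ t, φ (-t) = φ t) ∧ (∀ t, 0 ≤ φ t) ∧ (∀ t, φ t = 0 ↔ t = 0)

/-- The Luxemburg norm `‖f‖_{L^φ} = inf{α > 0 : ∫ φ(f/α) dμ ≤ 1}`,
with the convention `inf ∅ = ∞`. -/
noncomputable def luxNorm {Z : Type*} [MeasurableSpace Z] (φ : ℝ → ℝ) (μ : Measure Z)
    (f : Z → ℝ) : ℝ≥0∞ :=
  sInf (ENNReal.ofReal '' {α : ℝ | 0 < α ∧ ∫⁻ x, ENNReal.ofReal (φ (f x / α)) ∂μ ≤ 1})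

/-!
For `x ∈ B(0,1)` and `y ∈ B(0,1/2)`, integrating `Df` along the segment from `y` to `x` gives
`|f x - f y| ≤ (3/2) ∫₀¹ ‖Df((1-t)y + tx)‖ dt`. Averaging in `y`, Jensen's inequality and
`φ(λu) ≤ λφ(u)` for `λ ≤ 1` bound `φ((f x - c)/(Cα))` by `3/(2C)` times the average of
`φ(‖Df‖/α)` over the points `(1-t)y + tx`. Integrating in `x`, for each `t` one of the
substitutions `y ↦ (1-t)y + tx` (if `t ≤ 1/2`) or `x ↦ (1-t)y + tx` (if `t ≥ 1/2`) has Jacobian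
at least `2^{-n}`. Hence the modular of `(f - c)/(Cα)` is at most `(3/(2C))·2^n|B|/|B(0,1/2)|`
times that of `‖Df‖/α`, a factor equal to `1` for `C = (3/2)·4^n`.
-/

open Metric Set Module

namespace IsYoungFunction

variable {φ : ℝ → ℝ}

theorem map_zero (hφ : IsYoungFunction φ) : φ 0 = 0 := (hφ.2.2.2 0).2 rfl

theorem nonneg (hφ : IsYoungFunction φ) (t : ℝ) : 0 ≤ φ t := hφ.2.2.1 t

theorem continuous (hφ : IsYoungFunction φ) : Continuous φ :=
  continuousOn_univ.1 (hφ.1.continuousOn isOpen_univ)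

theorem map_abs (hφ : IsYoungFunction φ) (t : ℝ) : φ |t| = φ t := by
  rcases abs_choice t with h | h <;> rw [h]
  exact hφ.2.1 t

theorem map_mul_le (hφ : IsYoungFunction φ) {l : ℝ} (hl₀ : 0 ≤ l) (hl₁ : l ≤ 1) (u : ℝ) :
    φ (l * u) ≤ l * φ u := by
  simpa [hφ.map_zero] using
    hφ.1.2 (mem_univ u) (mem_univ 0) hl₀ (sub_nonneg.2 hl₁) (add_sub_cancel l 1)

theorem monotoneOn (hφ : IsYoungFunction φ) : MonotoneOn φ (Ici 0) := by
  intro s hs u _ hsu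
  rcases (mem_Ici.1 hs).eq_or_lt' with rfl | hs₀
  · rw [hφ.map_zero]; exact hφ.nonneg u
  have hu : 0 < u := hs₀.trans_le hsu
  have hl : s / u ≤ 1 := (div_le_one hu).2 hsu
  calc φ s = φ (s / u * u) := by rw [div_mul_cancel₀ s hu.ne']
    _ ≤ s / u * φ u := hφ.map_mul_le (div_nonneg hs hu.le) hl u
    _ ≤ φ u := mul_le_of_le_one_left (hφ.nonneg u) hl

theorem map_le_mul_setAverage (hφ : IsYoungFunction φ) {X : Type*} [MeasurableSpace X]
    {μ : Measure X} {s : Set X} (hs₀ : μ s ≠ 0) (hs : μ s ≠ ∞) {h : X → ℝ}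
    (hh : ∀ x, 0 ≤ h x) (hint : IntegrableOn h s μ) (hφint : IntegrableOn (fun x ↦ φ (h x)) s μ)
    {a l : ℝ} (hl₀ : 0 ≤ l) (hl₁ : l ≤ 1) (ha : |a| ≤ l * ⨍ x in s, h x ∂μ) :
    φ a ≤ l * ⨍ x in s, φ (h x) ∂μ := by
  have havg : 0 ≤ ⨍ x in s, h x ∂μ := by
    rw [setAverage_eq, smul_eq_mul]
    exact mul_nonneg (inv_nonneg.2 measureReal_nonneg) (integral_nonneg hh)
  calc φ a = φ |a| := (hφ.map_abs a).symm
    _ ≤ φ (l * ⨍ x in s, h x ∂μ) :=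
      hφ.monotoneOn (abs_nonneg a) (mem_Ici.2 (mul_nonneg hl₀ havg)) ha
    _ ≤ l * φ (⨍ x in s, h x ∂μ) := hφ.map_mul_le hl₀ hl₁ _
    _ ≤ l * ⨍ x in s, φ (h x) ∂μ := by
      gcongr
      exact hφ.1.map_set_average_le hφ.continuous.continuousOn isClosed_univ hs₀ hs
        (by simp) hint hφint

end IsYoungFunction

theorem luxNorm_le_ofReal_mul {Z : Type*} [MeasurableSpace Z] {φ : ℝ → ℝ} {μ : Measure Z}
    {F G : Z → ℝ} {C : ℝ} (hC : 0 < C)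
    (h : ∀ α, 0 < α → ∫⁻ x, ENNReal.ofReal (φ (G x / α)) ∂μ ≤ 1 →
      ∫⁻ x, ENNReal.ofReal (φ (F x / (C * α))) ∂μ ≤ 1) :
    luxNorm φ μ F ≤ ENNReal.ofReal C * luxNorm φ μ G := by
  set S := {α : ℝ | 0 < α ∧ ∫⁻ x, ENNReal.ofReal (φ (F x / α)) ∂μ ≤ 1}
  set T := {α : ℝ | 0 < α ∧ ∫⁻ x, ENNReal.ofReal (φ (G x / α)) ∂μ ≤ 1}
  have hTS : ∀ α ∈ T, C * α ∈ S := fun α hα ↦ ⟨mul_pos hC hα.1, h α hα.1 hα.2⟩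
  calc sInf (ENNReal.ofReal '' S) ≤ ⨅ α ∈ T, ENNReal.ofReal (C * α) :=
      le_iInf₂ fun α hα ↦ sInf_le (mem_image_of_mem _ (hTS α hα))
    _ = ENNReal.ofReal C * sInf (ENNReal.ofReal '' T) := by
      simp_rw [sInf_image, ENNReal.mul_iInf_of_ne (ofReal_pos.2 hC).ne' ofReal_ne_top,
        ENNReal.ofReal_mul hC.le]

theorem ofReal_inv_pow_le_two_pow {s : ℝ} (hs : 1 / 2 ≤ s) (d : ℕ) :
    ENNReal.ofReal (s ^ d)⁻¹ ≤ 2 ^ d := by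
  have hs₀ : 0 < s := by linarith
  rw [← inv_pow, ENNReal.ofReal_pow (inv_nonneg.2 hs₀.le)]
  gcongr
  rw [ENNReal.ofReal_le_iff_le_toReal (by simp)]
  simpa using inv_le_of_inv_le₀ (by norm_num) (by simpa using hs)

section AddHaar

variable {E : Type*} [NormedAddCommGroup E] [NormedSpace ℝ E] [MeasurableSpace E] [BorelSpace E]
  [FiniteDimensional ℝ E] (μ : Measure E) [μ.IsAddHaarMeasure]

theorem lintegral_comp_add_smul (Φ : E → ℝ≥0∞) (a : E) {s : ℝ} (hs : s ≠ 0) :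
    ∫⁻ y, Φ (a + s • y) ∂μ = ENNReal.ofReal |(s ^ finrank ℝ E)⁻¹| * ∫⁻ z, Φ z ∂μ := by
  rw [← lintegral_add_left_eq_self (μ := μ) Φ a, ← smul_eq_mul, ← lintegral_smul_measure,
    ← Measure.map_addHaar_smul μ hs]
  exact (lintegral_map_equiv (fun z ↦ Φ (a + z))
    (Homeomorph.smul (isUnit_iff_ne_zero.2 hs).unit).toMeasurableEquiv).symm

theorem setLIntegral_comp_add_smul_le (Φ : E → ℝ≥0∞) {S T : Set E} (hS : MeasurableSet S)
    (hT : MeasurableSet T) (a : E) {s : ℝ} (hs : 0 < s) (hST : ∀ y ∈ S, a + s • y ∈ T) :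
    ∫⁻ y in S, Φ (a + s • y) ∂μ ≤ ENNReal.ofReal (s ^ finrank ℝ E)⁻¹ * ∫⁻ z in T, Φ z ∂μ := by
  calc ∫⁻ y in S, Φ (a + s • y) ∂μ = ∫⁻ y in S, T.indicator Φ (a + s • y) ∂μ :=
        setLIntegral_congr_fun hS fun y hy ↦ (indicator_of_mem (hST y hy) Φ).symm
    _ ≤ ∫⁻ y, T.indicator Φ (a + s • y) ∂μ := setLIntegral_le_lintegral S _
    _ = ENNReal.ofReal (s ^ finrank ℝ E)⁻¹ * ∫⁻ z in T, Φ z ∂μ := by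
      rw [lintegral_comp_add_smul μ _ a hs.ne', lintegral_indicator hT,
        abs_of_pos (inv_pos.2 (pow_pos hs _))]

theorem lintegral_ball_lintegral_halfBall_le (Φ : E → ℝ≥0∞) (hΦ : Measurable Φ) {t : ℝ}
    (ht : t ∈ Icc (0 : ℝ) 1) :
    ∫⁻ x in ball (0 : E) 1, ∫⁻ y in ball (0 : E) (1 / 2), Φ ((1 - t) • y + t • x) ∂μ ∂μ ≤
      2 ^ finrank ℝ E * μ (ball 0 1) * ∫⁻ z in ball (0 : E) 1, Φ z ∂μ := by
  set B := ball (0 : E) 1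
  set B' := ball (0 : E) (1 / 2)
  have hB'B : B' ⊆ B := ball_subset_ball (by norm_num)
  have hmem : ∀ x ∈ B, ∀ y ∈ B', (1 - t) • y + t • x ∈ B := fun x hx y hy ↦
    convex_ball 0 1 (hB'B hy) hx (by linarith [ht.2]) ht.1 (by ring)
  rcases le_total t (1 / 2) with ht' | ht'
  · calc _ ≤ ∫⁻ _ in B, 2 ^ finrank ℝ E * ∫⁻ z in B, Φ z ∂μ ∂μ := by
          refine setLIntegral_mono' measurableSet_ball fun x hx ↦ ?_
          simp_rw [add_comm ((1 - t) • _)]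
          have hs : 0 < 1 - t := by linarith
          refine (setLIntegral_comp_add_smul_le μ Φ (T := B) measurableSet_ball measurableSet_ball
            _ hs fun y hy ↦ ?_).trans ?_
          · rw [add_comm]; exact hmem x hx y hy
          · gcongr; exact ofReal_inv_pow_le_two_pow (by linarith) _
      _ = _ := by rw [setLIntegral_const]; ring
  · have hΦ' : Measurable fun w : E × E ↦ Φ ((1 - t) • w.2 + t • w.1) :=
      hΦ.comp (by fun_prop : Continuous fun w : E × E ↦ (1 - t) • w.2 + t • w.1).measurable
    have hs : 0 < t := by linarith
    rw [lintegral_lintegral_swap hΦ'.aemeasurable]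
    calc _ ≤ ∫⁻ _ in B', 2 ^ finrank ℝ E * ∫⁻ z in B, Φ z ∂μ ∂μ := by
          refine setLIntegral_mono' measurableSet_ball fun y hy ↦ ?_
          refine (setLIntegral_comp_add_smul_le μ Φ (T := B) measurableSet_ball measurableSet_ball
            _ hs fun x hx ↦ hmem x hx y hy).trans ?_
          gcongr; exact ofReal_inv_pow_le_two_pow ht' _
      _ = 2 ^ finrank ℝ E * μ B' * ∫⁻ z in B, Φ z ∂μ := by rw [setLIntegral_const]; ring
      _ ≤ _ := by gcongr

theorem lintegral_ball_setLIntegral_halfBall_prod_Icc_le (Φ : E → ℝ≥0∞) (hΦ : Measurable Φ) :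
    ∫⁻ x in ball (0 : E) 1, ∫⁻ q in ball (0 : E) (1 / 2) ×ˢ Icc (0 : ℝ) 1,
        Φ ((1 - q.2) • q.1 + q.2 • x) ∂μ.prod volume ∂μ ≤
      2 ^ finrank ℝ E * μ (ball 0 1) * ∫⁻ z in ball (0 : E) 1, Φ z ∂μ := by
  set B := ball (0 : E) 1
  set B' := ball (0 : E) (1 / 2)
  set I := Icc (0 : ℝ) 1
  have hΦ₁ : ∀ x, Measurable fun q : E × ℝ ↦ Φ ((1 - q.2) • q.1 + q.2 • x) := fun x ↦
    hΦ.comp (by fun_prop : Continuous fun q : E × ℝ ↦ (1 - q.2) • q.1 + q.2 • x).measurable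
  have hΦ₂ : Measurable fun p : (E × ℝ) × E ↦ Φ ((1 - p.1.2) • p.2 + p.1.2 • p.1.1) :=
    hΦ.comp (by fun_prop : Continuous fun p : (E × ℝ) × E ↦
      (1 - p.1.2) • p.2 + p.1.2 • p.1.1).measurable
  calc _ = ∫⁻ x in B, ∫⁻ t in I, ∫⁻ y in B', Φ ((1 - t) • y + t • x) ∂μ ∂volume ∂μ := by
        refine lintegral_congr fun x ↦ ?_
        rw [setLIntegral_prod _ (hΦ₁ x).aemeasurable]
        exact lintegral_lintegral_swap (hΦ₁ x).aemeasurable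
    _ = ∫⁻ t in I, ∫⁻ x in B, ∫⁻ y in B', Φ ((1 - t) • y + t • x) ∂μ ∂μ ∂volume :=
        lintegral_lintegral_swap hΦ₂.lintegral_prod_right'.aemeasurable
    _ ≤ ∫⁻ _ in I, 2 ^ finrank ℝ E * μ B * ∫⁻ z in B, Φ z ∂μ :=
        setLIntegral_mono' measurableSet_Icc fun t ht ↦
          lintegral_ball_lintegral_halfBall_le μ Φ hΦ ht
    _ = _ := by simp [I]

end AddHaar

theorem norm_sub_le_mul_integral_norm_fderiv {E F : Type*} [NormedAddCommGroup E]
    [NormedSpace ℝ E] [NormedAddCommGroup F] [NormedSpace ℝ F] [CompleteSpace F] {f : E → F}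
    {U : Set E} (hU : IsOpen U) (hf : ContDiffOn ℝ 1 f U) {x y : E} (hxy : segment ℝ y x ⊆ U) :
    ‖f x - f y‖ ≤ ‖x - y‖ * ∫ t in Icc (0 : ℝ) 1, ‖fderiv ℝ f ((1 - t) • y + t • x)‖ := by
  set γ : ℝ → E := fun t ↦ (1 - t) • y + t • x
  have hγU : ∀ t ∈ Icc (0 : ℝ) 1, γ t ∈ U := fun t ht ↦
    hxy ⟨1 - t, t, by linarith [ht.2], ht.1, by ring, rfl⟩
  have hγ' : ∀ t, HasDerivAt γ (x - y) t := fun t ↦ by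
    convert AffineMap.hasDerivAt_lineMap (a := y) (b := x) (x := t) using 1
    ext s
    exact (AffineMap.lineMap_apply_module y x s).symm
  have hDf : ContinuousOn (fun t ↦ fderiv ℝ f (γ t)) (Icc 0 1) :=
    (hf.continuousOn_fderiv_of_isOpen hU le_rfl).comp (by fun_prop) hγU
  have hderiv : ∀ t ∈ uIcc (0 : ℝ) 1, HasDerivAt (f ∘ γ) (fderiv ℝ f (γ t) (x - y)) t := by
    intro t ht
    rw [uIcc_of_le zero_le_one] at ht
    exact ((hf.differentiableOn one_ne_zero).differentiableAt
      (hU.mem_nhds (hγU t ht))).hasFDerivAt.comp_hasDerivAt t (hγ' t)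
  have hftc := intervalIntegral.integral_eq_sub_of_hasDerivAt hderiv
    ((hDf.clm_apply continuousOn_const).intervalIntegrable_of_Icc zero_le_one)
  have hIcc : ∫ t in (0 : ℝ)..1, ‖fderiv ℝ f (γ t)‖ * ‖x - y‖ =
      ‖x - y‖ * ∫ t in Icc (0 : ℝ) 1, ‖fderiv ℝ f (γ t)‖ := by
    rw [intervalIntegral.integral_of_le zero_le_one, ← integral_Icc_eq_integral_Ioc,
      integral_mul_const, mul_comm]
  simp only [Function.comp_def, γ, sub_zero, zero_smul, one_smul, add_zero, sub_self,
    zero_add] at hftc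
  rw [← hftc, ← hIcc]
  exact intervalIntegral.norm_integral_le_of_norm_le zero_le_one
    (ae_of_all _ fun t _ ↦ (fderiv ℝ f (γ t)).le_opNorm (x - y))
    ((hDf.norm.mul continuousOn_const).intervalIntegrable_of_Icc zero_le_one)

section Poincare

variable {E : Type*} [NormedAddCommGroup E] [NormedSpace ℝ E] [MeasurableSpace E] [BorelSpace E]
  [FiniteDimensional ℝ E] (μ : Measure E) [μ.IsAddHaarMeasure] {f : E → ℝ}

theorem integrableOn_comp_norm_fderiv_convexComb (hf : ContDiffOn ℝ 1 f (ball 0 1)) {x : E}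
    (hx : x ∈ ball (0 : E) 1) {G : ℝ → ℝ} (hG : Continuous G) :
    IntegrableOn (fun q : E × ℝ ↦ G ‖fderiv ℝ f ((1 - q.2) • q.1 + q.2 • x)‖)
      (ball (0 : E) (1 / 2) ×ˢ Icc (0 : ℝ) 1) (μ.prod volume) := by
  refine (ContinuousOn.integrableOn_compact ((isCompact_closedBall 0 (1 / 2)).prod isCompact_Icc)
    ?_).mono_set (prod_mono ball_subset_closedBall subset_rfl)
  refine hG.comp_continuousOn ((hf.continuousOn_fderiv_of_isOpen isOpen_ball le_rfl).norm.comp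
    (by fun_prop) ?_)
  rintro ⟨y, t⟩ ⟨hy, ht⟩
  exact convex_ball 0 1 (closedBall_subset_ball (by norm_num) hy) hx (by linarith [ht.2]) ht.1
    (by ring)

theorem abs_sub_setAverage_le (hf : ContDiffOn ℝ 1 f (ball 0 1)) {x : E}
    (hx : x ∈ ball (0 : E) 1) :
    |f x - ⨍ y in ball (0 : E) (1 / 2), f y ∂μ| ≤
      3 / 2 * ⨍ q in ball (0 : E) (1 / 2) ×ˢ Icc (0 : ℝ) 1,
        ‖fderiv ℝ f ((1 - q.2) • q.1 + q.2 • x)‖ ∂μ.prod volume := by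
  set B' := ball (0 : E) (1 / 2)
  set I := Icc (0 : ℝ) 1
  set g : E × ℝ → ℝ := fun q ↦ ‖fderiv ℝ f ((1 - q.2) • q.1 + q.2 • x)‖
  have hB'B : B' ⊆ ball 0 1 := ball_subset_ball (by norm_num)
  have hm : 0 < μ.real B' :=
    ENNReal.toReal_pos (measure_ball_pos μ 0 (by norm_num)).ne' measure_ball_lt_top.ne
  have hprod : (μ.prod volume).real (B' ×ˢ I) = μ.real B' := by
    simp [measureReal_def, Measure.prod_prod, I]
  have hg : IntegrableOn g (B' ×ˢ I) (μ.prod volume) :=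
    integrableOn_comp_norm_fderiv_convexComb μ hf hx continuous_id
  have hfB' : IntegrableOn f B' μ :=
    ((hf.continuousOn.mono (closedBall_subset_ball (by norm_num))).integrableOn_compact
      (isCompact_closedBall 0 (1 / 2))).mono_set ball_subset_closedBall
  have hconst : IntegrableOn (fun _ ↦ f x) B' μ := integrableOn_const measure_ball_lt_top.ne
  have hsegment : ∀ y ∈ B', |f x - f y| ≤ 3 / 2 * ∫ t in I, g (y, t) := by
    intro y hy
    have hxy : ‖x - y‖ ≤ 3 / 2 := by
      have := norm_sub_le x y
      rw [mem_ball_zero_iff] at hx hy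
      linarith
    refine (norm_sub_le_mul_integral_norm_fderiv isOpen_ball hf
      ((convex_ball 0 1).segment_subset (hB'B hy) hx)).trans ?_
    gcongr
  calc |f x - ⨍ y in B', f y ∂μ| = (μ.real B')⁻¹ * |∫ y in B', (f x - f y) ∂μ| := by
        rw [integral_sub hconst hfB', setIntegral_const, setAverage_eq, smul_eq_mul,
          smul_eq_mul, ← abs_of_pos (inv_pos.2 hm), ← abs_mul, abs_of_pos (inv_pos.2 hm)]
        field_simp
    _ ≤ (μ.real B')⁻¹ * ∫ y in B', (3 / 2 * ∫ t in I, g (y, t)) ∂μ := by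
        have hg' : Integrable g ((μ.restrict B').prod (volume.restrict I)) := by
          rwa [Measure.prod_restrict]
        gcongr
        exact abs_integral_le_integral_abs.trans (setIntegral_mono_on (hconst.sub hfB').abs
          (hg'.integral_prod_left.const_mul _) measurableSet_ball hsegment)
    _ = 3 / 2 * ⨍ q in B' ×ˢ I, g q ∂μ.prod volume := by
        rw [integral_const_mul, ← setIntegral_prod _ hg, setAverage_eq, hprod, smul_eq_mul]
        ring

theorem ofReal_map_sub_setAverage_le {φ : ℝ → ℝ} (hφ : IsYoungFunction φ)
    (hf : ContDiffOn ℝ 1 f (ball 0 1)) {x : E} (hx : x ∈ ball (0 : E) 1) {α C : ℝ}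
    (hα : 0 < α) (hC : 3 / 2 ≤ C) :
    ENNReal.ofReal (φ ((f x - ⨍ y in ball (0 : E) (1 / 2), f y ∂μ) / (C * α))) ≤
      ENNReal.ofReal (3 / (2 * C) / μ.real (ball (0 : E) (1 / 2))) *
        ∫⁻ q in ball (0 : E) (1 / 2) ×ˢ Icc (0 : ℝ) 1,
          ENNReal.ofReal (φ (‖fderiv ℝ f ((1 - q.2) • q.1 + q.2 • x)‖ / α)) ∂μ.prod volume := by
  set S := ball (0 : E) (1 / 2) ×ˢ Icc (0 : ℝ) 1
  set g : E × ℝ → ℝ := fun q ↦ ‖fderiv ℝ f ((1 - q.2) • q.1 + q.2 • x)‖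
  have hS : (μ.prod volume) S = μ (ball 0 (1 / 2)) := by simp [S, Measure.prod_prod]
  have hS₀ : (μ.prod volume) S ≠ 0 := hS ▸ (measure_ball_pos μ 0 (by norm_num)).ne'
  have hS_top : (μ.prod volume) S ≠ ∞ := hS ▸ measure_ball_lt_top.ne
  have hC₀ : 0 < C := by linarith
  have hφint : IntegrableOn (fun q ↦ φ (g q / α)) S (μ.prod volume) :=
    integrableOn_comp_norm_fderiv_convexComb μ hf hx
      (hφ.continuous.comp (continuous_id.div_const α))
  have hbound : |(f x - ⨍ y in ball (0 : E) (1 / 2), f y ∂μ) / (C * α)| ≤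
      3 / (2 * C) * ⨍ q in S, g q / α ∂μ.prod volume := by
    have havg : ⨍ q in S, g q / α ∂μ.prod volume = (⨍ q in S, g q ∂μ.prod volume) / α := by
      simp_rw [setAverage_eq, integral_div, smul_eq_mul, mul_div_assoc]
    rw [abs_div, abs_of_pos (mul_pos hC₀ hα), havg]
    calc _ ≤ 3 / 2 * (⨍ q in S, g q ∂μ.prod volume) / (C * α) := by
          gcongr; exact abs_sub_setAverage_le μ hf hx
      _ = _ := by field_simp
  have hjensen := hφ.map_le_mul_setAverage hS₀ hS_top (fun q ↦ div_nonneg (norm_nonneg _) hα.le)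
    ((integrableOn_comp_norm_fderiv_convexComb μ hf hx continuous_id).div_const α) hφint
    (by positivity) ((div_le_one (by positivity)).2 (by linarith)) hbound
  rw [setAverage_eq _ (fun q ↦ φ (g q / α)), smul_eq_mul, measureReal_def, hS,
    ← mul_assoc] at hjensen
  rw [measureReal_def, ← ofReal_integral_eq_lintegral_ofReal hφint
    (ae_of_all _ fun q ↦ hφ.nonneg _), ← ENNReal.ofReal_mul (by positivity)]
  exact ENNReal.ofReal_le_ofReal (by simpa [div_eq_mul_inv] using hjensen)

theorem setLIntegral_map_sub_setAverage_le_one {φ : ℝ → ℝ} (hφ : IsYoungFunction φ)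
    (hf : ContDiffOn ℝ 1 f (ball 0 1)) {α : ℝ} (hα : 0 < α)
    (hmod : ∫⁻ x in ball (0 : E) 1, ENNReal.ofReal (φ (‖fderiv ℝ f x‖ / α)) ∂μ ≤ 1) :
    ∫⁻ x in ball (0 : E) 1, ENNReal.ofReal (φ ((f x - ⨍ y in ball (0 : E) (1 / 2), f y ∂μ) /
      (3 / 2 * 4 ^ finrank ℝ E * α))) ∂μ ≤ 1 := by
  set d := finrank ℝ E
  set B := ball (0 : E) 1
  set Φ : E → ℝ≥0∞ := fun z ↦ ENNReal.ofReal (φ (‖fderiv ℝ f z‖ / α))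
  set K := ENNReal.ofReal (3 / (2 * (3 / 2 * 4 ^ d)) / μ.real (ball (0 : E) (1 / 2)))
  have hΦ : Measurable Φ :=
    (hφ.continuous.measurable.comp ((measurable_fderiv ℝ f).norm.div_const α)).ennreal_ofReal
  have hK : K * (2 ^ d * μ B) = 1 := by
    have hv : 0 < μ.real B :=
      ENNReal.toReal_pos (measure_ball_pos μ 0 one_pos).ne' measure_ball_lt_top.ne
    have hB' : μ.real (ball (0 : E) (1 / 2)) = (1 / 2) ^ d * μ.real B := by
      rw [measureReal_def, Measure.addHaar_ball_of_pos μ 0 (by norm_num), ENNReal.toReal_mul,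
        ENNReal.toReal_ofReal (by positivity), measureReal_def]
    rw [← ofReal_measureReal measure_ball_lt_top.ne, ← ENNReal.ofReal_ofNat 2,
      ← ENNReal.ofReal_pow zero_le_two, ← ENNReal.ofReal_mul (by positivity),
      ← ENNReal.ofReal_mul (by positivity), hB', ← ENNReal.ofReal_one]
    congr 1
    rw [show (4 : ℝ) = 2 * 2 by norm_num, mul_pow, div_pow, one_pow]
    field_simp
    rfl
  calc _ ≤ ∫⁻ x in B, K * ∫⁻ q in ball (0 : E) (1 / 2) ×ˢ Icc (0 : ℝ) 1,
        Φ ((1 - q.2) • q.1 + q.2 • x) ∂μ.prod volume ∂μ :=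
        setLIntegral_mono' measurableSet_ball fun x hx ↦
          ofReal_map_sub_setAverage_le μ hφ hf hx hα
            (le_mul_of_one_le_right (by norm_num) (one_le_pow₀ (by norm_num)))
    _ = K * ∫⁻ x in B, ∫⁻ q in ball (0 : E) (1 / 2) ×ˢ Icc (0 : ℝ) 1,
        Φ ((1 - q.2) • q.1 + q.2 • x) ∂μ.prod volume ∂μ := lintegral_const_mul' _ _ ofReal_ne_top
    _ ≤ K * (2 ^ d * μ B * ∫⁻ z in B, Φ z ∂μ) := by
        gcongr; exact lintegral_ball_setLIntegral_halfBall_prod_Icc_le μ Φ hΦ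
    _ ≤ 1 := by grw [hmod, mul_one, hK]

theorem luxNorm_sub_setAverage_le {φ : ℝ → ℝ} (hφ : IsYoungFunction φ)
    (hf : ContDiffOn ℝ 1 f (ball 0 1)) :
    luxNorm φ (μ.restrict (ball 0 1)) (fun x ↦ f x - ⨍ y in ball (0 : E) (1 / 2), f y ∂μ) ≤
      ENNReal.ofReal (3 / 2 * 4 ^ finrank ℝ E) *
        luxNorm φ (μ.restrict (ball 0 1)) (fun x ↦ ‖fderiv ℝ f x‖) :=
  luxNorm_le_ofReal_mul (by positivity) fun _ hα hmod ↦
    setLIntegral_map_sub_setAverage_le_one μ hφ hf hα hmod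

end Poincare

theorem orlicz_poincare_unit_ball_general (n : ℕ) :
    ∃ C : ℝ, 0 < C ∧ ∀ φ : ℝ → ℝ, IsYoungFunction φ →
      ∀ f : EuclideanSpace ℝ (Fin n) → ℝ,
        ContDiffOn ℝ 1 f (Metric.ball (0 : EuclideanSpace ℝ (Fin n)) 1) →
        luxNorm φ (volume.restrict (Metric.ball (0 : EuclideanSpace ℝ (Fin n)) 1))
            (fun x => f x -
              (volume (Metric.ball (0 : EuclideanSpace ℝ (Fin n)) (1 / 2))).toReal⁻¹ *
                ∫ w in Metric.ball (0 : EuclideanSpace ℝ (Fin n)) (1 / 2), f w) ≤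
          ENNReal.ofReal C *
            luxNorm φ (volume.restrict (Metric.ball (0 : EuclideanSpace ℝ (Fin n)) 1))
              (fun x => ‖fderiv ℝ f x‖) := by
  refine ⟨3 / 2 * 4 ^ n, by positivity, fun φ hφ f hf ↦ ?_⟩
  simpa [setAverage_eq, measureReal_def] using luxNorm_sub_setAverage_le volume hφ hf

/-- Orlicz–Poincaré inequality on the unit ball of `ℝ^n`: there is a constant `C > 0`
depending only on `n` such that for every Young function `φ` and every `C¹` function
`f` on the unit ball `B`, with `c` the average of `f` over `B(0,1/2)`, one has
`‖f − c‖_{L^φ(B)} ≤ C·‖‖Df‖‖_{L^φ(B)}`. -/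
theorem orlicz_poincare_unit_ball (n : ℕ) (hn : 1 ≤ n) :
    ∃ C : ℝ, 0 < C ∧ ∀ φ : ℝ → ℝ, IsYoungFunction φ →
      ∀ f : EuclideanSpace ℝ (Fin n) → ℝ,
        ContDiffOn ℝ 1 f (Metric.ball (0 : EuclideanSpace ℝ (Fin n)) 1) →
        luxNorm φ (volume.restrict (Metric.ball (0 : EuclideanSpace ℝ (Fin n)) 1))
            (fun x => f x -
              (volume (Metric.ball (0 : EuclideanSpace ℝ (Fin n)) (1 / 2))).toReal⁻¹ *
                ∫ w in Metric.ball (0 : EuclideanSpace ℝ (Fin n)) (1 / 2), f w) ≤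
          ENNReal.ofReal C *
            luxNorm φ (volume.restrict (Metric.ball (0 : EuclideanSpace ℝ (Fin n)) 1))
              (fun x => ‖fderiv ℝ f x‖) :=
  orlicz_poincare_unit_ball_general n
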